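/- For every integer n ≥ 2, the total domination number of the central graph of the complete graph K_n equals n + ⌈n/2⌉ − 1. -/

import Mathlib

open SimpleGraph

/-- The central graph `C(G)`: subdivide each edge of `G` once (vertex `c_e` for each
edge `e`) and join all non-adjacent pairs of original vertices. -/
def centralGraph {V : Type*} (G : SimpleGraph V) : SimpleGraph (V ⊕ G.edgeSet) where
  Adj x y :=
    match x, y with
    | Sum.inl u, Sum.inl v => u ≠ v ∧ ¬ G.Adj u v
    | Sum.inl u, Sum.inr e => u ∈ (e : Sym2 V)
    | Sum.inr e, Sum.inl u => u ∈ (e : Sym2 V)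
    | Sum.inr _, Sum.inr _ => False
  symm := ⟨by
    rintro (u | e) (v | f) h
    · exact ⟨h.1.symm, fun a => h.2 a.symm⟩
    · exact h
    · exact h
    · exact h⟩
  loopless := ⟨by
    rintro (u | e) h
    · exact h.1 rfl
    · exact h⟩

/-- `f` is a total dominator coloring of `G`: a proper coloring such that every
vertex is adjacent to all vertices of some (nonempty) color class. -/
def IsTDColoring {V : Type*} (G : SimpleGraph V) (f : V → ℕ) : Prop :=
  (∀ u v, G.Adj u v → f u ≠ f v) ∧
  ∀ v, ∃ c, (∃ w, f w = c) ∧ ∀ w, f w = c → G.Adj v w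

/-- Total dominator chromatic number: minimum number of colors in a TDC. -/
noncomputable def tdcn {V : Type*} (G : SimpleGraph V) : ℕ :=
  sInf {k | ∃ f : V → ℕ, IsTDColoring G f ∧ ∀ v, f v < k}

/-- Total domination number. -/
noncomputable def tdn {V : Type*} (G : SimpleGraph V) : ℕ :=
  sInf {k | ∃ S : Set V, S.ncard = k ∧ ∀ v, ∃ u ∈ S, G.Adj v u}

/-- The join of two graphs. -/
def joinGraph {α β : Type*} (G : SimpleGraph α) (H : SimpleGraph β) :
    SimpleGraph (α ⊕ β) where
  Adj x y :=
    match x, y with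
    | Sum.inl u, Sum.inl v => G.Adj u v
    | Sum.inr u, Sum.inr v => H.Adj u v
    | Sum.inl _, Sum.inr _ => True
    | Sum.inr _, Sum.inl _ => True
  symm := ⟨by rintro (u | u) (v | v) h <;> first | exact h.symm | trivial⟩
  loopless := ⟨by rintro (u | u) h <;> exact h.ne rfl⟩

/-- The path graph on `n` vertices. -/
def pathG (n : ℕ) : SimpleGraph (Fin n) :=
  SimpleGraph.fromRel (fun i j => (i : ℕ) + 1 = (j : ℕ))

/-- The cycle graph on `n` vertices. -/
def cycleG (n : ℕ) : SimpleGraph (ZMod n) :=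
  SimpleGraph.fromRel (fun i j => i - j = 1)

/-- The double star `S_{1,n,n}`: center `0`, support vertices `1,...,n`
(adjacent to the center), each `i` with its own pendant `n+i`. -/
def doubleStar (n : ℕ) : SimpleGraph (Fin (2 * n + 1)) :=
  SimpleGraph.fromRel (fun a b =>
    ((a : ℕ) = 0 ∧ 1 ≤ (b : ℕ) ∧ (b : ℕ) ≤ n) ∨
    (1 ≤ (a : ℕ) ∧ (a : ℕ) ≤ n ∧ (b : ℕ) = (a : ℕ) + n))

/-- The disjoint union of a family of graphs. -/
def sigmaGraph {ι : Type*} {V : ι → Type*} (G : ∀ i, SimpleGraph (V i)) :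
    SimpleGraph (Σ i, V i) :=
  SimpleGraph.fromRel (fun x y =>
    ∃ (i : ι) (u v : V i), (G i).Adj u v ∧ x = ⟨i, u⟩ ∧ y = ⟨i, v⟩)

/-!
In `C(K_n)` the vertex `c_{ij}` is adjacent only to `v_i` and `v_j`, and `v_i` only to the
`c_{ij}`. So a total dominating set `S` must meet every pair `{v_i, v_j}`, i.e. contain all but at
most one `v_i`, and its subdivision vertices must form an edge cover of `K_n`, which needs at least
`⌈n/2⌉` edges. Conversely, all but one `v_i` together with a minimum edge cover of `K_n` is a total
dominating set.
-/

namespace SimpleGraph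

variable {V : Type*} (G : SimpleGraph V)

def IsTotalDominatingSet (S : Set V) : Prop :=
  ∀ v, ∃ u ∈ S, G.Adj v u

def IsEdgeCover (B : Set G.edgeSet) : Prop :=
  ∀ v, ∃ e ∈ B, v ∈ (e : Sym2 V)

variable {G}

theorem IsEdgeCover.card_le_two_mul_ncard [Finite V] {B : Set G.edgeSet}
    (hB : G.IsEdgeCover B) : Nat.card V ≤ 2 * B.ncard := by
  classical
  cases nonempty_fintype V
  calc Nat.card V = (Finset.univ : Finset V).card := Nat.card_eq_fintype_card
    _ ≤ (B.toFinset.biUnion fun e => (e : Sym2 V).toFinset).card :=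
        Finset.card_le_card fun v _ => by
          obtain ⟨e, heB, hve⟩ := hB v
          exact Finset.mem_biUnion.mpr ⟨e, Set.mem_toFinset.mpr heB, Sym2.mem_toFinset.mpr hve⟩
    _ ≤ ∑ e ∈ B.toFinset, (e : Sym2 V).toFinset.card := Finset.card_biUnion_le
    _ ≤ ∑ _e ∈ B.toFinset, 2 := Finset.sum_le_sum fun e _ => by
        rw [Sym2.card_toFinset]; split_ifs <;> omega
    _ = 2 * B.ncard := by rw [Finset.sum_const, smul_eq_mul, Set.ncard_eq_toFinset_card', mul_comm]

theorem IsVertexCover.card_sub_one_le_ncard_of_top [Finite V] {A : Set V}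
    (hA : (⊤ : SimpleGraph V).IsVertexCover A) : Nat.card V - 1 ≤ A.ncard := by
  have hindep : (⊤ : SimpleGraph V).IsIndepSet Aᶜ := isIndepSet_compl_iff_isVertexCover.mpr hA
  have hcompl : Aᶜ.Subsingleton := fun x hx y hy => by
    by_contra hxy
    exact hindep hx hy hxy ((top_adj x y).mpr hxy)
  have := Set.ncard_le_one_iff_subsingleton.mpr hcompl
  have := Set.ncard_add_ncard_compl A
  omega

theorem isVertexCover_top_compl_singleton (x : V) :
    (⊤ : SimpleGraph V).IsVertexCover {x}ᶜ :=
  isVertexCover_compl.mpr (Set.pairwise_singleton _ _)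

end SimpleGraph

theorem Set.ncard_image_inl_union_image_inr {α β : Type*} [Finite α] [Finite β]
    (A : Set α) (B : Set β) :
    (Sum.inl '' A ∪ Sum.inr '' B : Set (α ⊕ β)).ncard = A.ncard + B.ncard := by
  rw [Set.ncard_union_eq Set.disjoint_image_inl_image_inr,
    Set.ncard_image_of_injective _ Sum.inl_injective,
    Set.ncard_image_of_injective _ Sum.inr_injective]

theorem tdn_eq_of_isTotalDominatingSet {V : Type*} {G : SimpleGraph V} {S : Set V} {m : ℕ}
    (hS : G.IsTotalDominatingSet S) (hSm : S.ncard ≤ m)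
    (hm : ∀ T, G.IsTotalDominatingSet T → m ≤ T.ncard) : tdn G = m :=
  le_antisymm (Nat.sInf_le ⟨S, le_antisymm hSm (hm S hS), hS⟩)
    (le_csInf ⟨_, S, rfl, hS⟩ fun _ ⟨T, hT, hTdom⟩ => hT ▸ hm T hTdom)

theorem isTotalDominatingSet_centralGraph {V : Type*} {G : SimpleGraph V} {A : Set V}
    {B : Set G.edgeSet} (hA : G.IsVertexCover A) (hB : G.IsEdgeCover B) :
    (centralGraph G).IsTotalDominatingSet (Sum.inl '' A ∪ Sum.inr '' B) := by
  rintro (v | ⟨e, he⟩)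
  · obtain ⟨e, heB, hve⟩ := hB v
    exact ⟨.inr e, Or.inr ⟨e, heB, rfl⟩, hve⟩
  · induction e using Sym2.ind with
    | _ v w =>
      rcases hA he with hv | hw
      · exact ⟨.inl v, Or.inl ⟨v, hv, rfl⟩, Sym2.mem_mk_left v w⟩
      · exact ⟨.inl w, Or.inl ⟨w, hw, rfl⟩, Sym2.mem_mk_right v w⟩

namespace SimpleGraph.IsTotalDominatingSet

variable {V : Type*}

theorem isVertexCover_preimage_inl {G : SimpleGraph V} {S : Set (V ⊕ G.edgeSet)}
    (hS : (centralGraph G).IsTotalDominatingSet S) : G.IsVertexCover (Sum.inl ⁻¹' S) := by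
  intro v w hvw
  obtain ⟨u | e, huS, hadj⟩ := hS (.inr ⟨s(v, w), hvw⟩)
  · rcases Sym2.mem_iff.mp hadj with rfl | rfl
    exacts [Or.inl huS, Or.inr huS]
  · exact hadj.elim

variable {S : Set (V ⊕ (⊤ : SimpleGraph V).edgeSet)}

theorem isEdgeCover_preimage_inr_of_top (hS : (centralGraph ⊤).IsTotalDominatingSet S) :
    (⊤ : SimpleGraph V).IsEdgeCover (Sum.inr ⁻¹' S) := by
  intro v
  obtain ⟨w | e, hwS, hadj⟩ := hS (.inl v)
  · exact absurd ((top_adj v w).mpr hadj.1) hadj.2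
  · exact ⟨e, hwS, hadj⟩

theorem le_ncard_of_centralGraph_top [Finite V] (hS : (centralGraph ⊤).IsTotalDominatingSet S) :
    Nat.card V + (Nat.card V + 1) / 2 - 1 ≤ S.ncard := by
  rw [← Set.image_preimage_inl_union_image_preimage_inr S, Set.ncard_image_inl_union_image_inr]
  have := hS.isVertexCover_preimage_inl.card_sub_one_le_ncard_of_top
  have := hS.isEdgeCover_preimage_inr_of_top.card_le_two_mul_ncard
  omega

end SimpleGraph.IsTotalDominatingSet

/-- Vertex `v` lies on edge `v / 2`; when `n` is odd the last edge is shifted back to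
`{n - 2, n - 1}`. -/
def Fin.topEdgeCover (n : ℕ) (hn : 2 ≤ n) (k : ℕ) : (⊤ : SimpleGraph (Fin n)).edgeSet :=
  ⟨s(⟨min (2 * k) (n - 2), by omega⟩, ⟨min (2 * k + 1) (n - 1), by omega⟩), by
    simp only [mem_edgeSet, top_adj, ne_eq, Fin.ext_iff]; omega⟩

theorem Fin.exists_isEdgeCover_top {n : ℕ} (hn : 2 ≤ n) :
    ∃ B : Set (⊤ : SimpleGraph (Fin n)).edgeSet,
      (⊤ : SimpleGraph (Fin n)).IsEdgeCover B ∧ B.ncard ≤ (n + 1) / 2 := by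
  let edge (k : Fin ((n + 1) / 2)) := Fin.topEdgeCover n hn k
  refine ⟨Set.range edge, fun v => ⟨_, ⟨⟨v / 2, by omega⟩, rfl⟩, ?_⟩, ?_⟩
  · simp only [edge, Fin.topEdgeCover, Sym2.mem_iff, Fin.ext_iff]
    omega
  · simpa [Set.image_univ] using Set.ncard_image_le (f := edge) Set.finite_univ

theorem tdn_central_complete (n : ℕ) (hn : 2 ≤ n) :
    tdn (centralGraph (⊤ : SimpleGraph (Fin n))) = n + (n + 1) / 2 - 1 := by
  obtain ⟨B, hB, hBcard⟩ := Fin.exists_isEdgeCover_top hn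
  let x : Fin n := ⟨0, by omega⟩
  refine tdn_eq_of_isTotalDominatingSet
    (isTotalDominatingSet_centralGraph (isVertexCover_top_compl_singleton x) hB) ?_
    fun S hS => by simpa using hS.le_ncard_of_centralGraph_top
  have hcompl := Set.ncard_add_ncard_compl {x}
  rw [Set.ncard_singleton, Nat.card_fin] at hcompl
  rw [Set.ncard_image_inl_union_image_inr]
  omega
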